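/- Let R = ℚ[a0, a1, b0]/J⁻ with J⁻ as in Theorem coho3n, and let m be the ideal generated by a0, a1, b0. Then m⁴ = 0, i.e., any product of four of the generators vanishes in R. -/
import Mathlib

open MvPolynomial Pointwise

noncomputable def a0 : MvPolynomial (Fin 3) ℚ := X 0
noncomputable def a1 : MvPolynomial (Fin 3) ℚ := X 1
noncomputable def b0 : MvPolynomial (Fin 3) ℚ := X 2

noncomputable def Jminus : Ideal (MvPolynomial (Fin 3) ℚ) :=
  Ideal.span {3 * b0 ^ 2 + 6 * a1 * b0 - a0 * b0, 2 * a1 * b0 - a1 * a0,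
    12 * a1 ^ 2 + a1 * a0, a0 ^ 2 * b0, 3 * a0 ^ 3 + 32 * a1 * a0 ^ 2}

noncomputable def mIdeal : Ideal (MvPolynomial (Fin 3) ℚ ⧸ Jminus) :=
  Ideal.span {Ideal.Quotient.mk Jminus a0, Ideal.Quotient.mk Jminus a1,
    Ideal.Quotient.mk Jminus b0}

lemma C_num (n : ℚ) : (C n : MvPolynomial (Fin 3) ℚ) = algebraMap ℚ _ n := rfl

lemma scaled_mem (n : ℚ) (hn : n ≠ 0) {p : MvPolynomial (Fin 3) ℚ}
    (h : C n * p ∈ Jminus) : p ∈ Jminus := by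
  have h2 := Ideal.mul_mem_left _ (C n⁻¹) h
  rwa [← mul_assoc, ← C_mul, inv_mul_cancel₀ hn, C_1, one_mul] at h2

lemma mem_of_eq {p q : MvPolynomial (Fin 3) ℚ} (h : p = q) (hq : q ∈ Jminus) :
    p ∈ Jminus := h ▸ hq

lemma hg1 : (3 * b0 ^ 2 + 6 * a1 * b0 - a0 * b0) ∈ Jminus := Ideal.subset_span (by simp [Jminus])

lemma hg2 : (2 * a1 * b0 - a1 * a0) ∈ Jminus := Ideal.subset_span (by simp [Jminus])

lemma hg3 : (12 * a1 ^ 2 + a1 * a0) ∈ Jminus := Ideal.subset_span (by simp [Jminus])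

lemma hg4 : (a0 ^ 2 * b0) ∈ Jminus := Ideal.subset_span (by simp [Jminus])

lemma hg5 : (3 * a0 ^ 3 + 32 * a1 * a0 ^ 2) ∈ Jminus := Ideal.subset_span (by simp [Jminus])

lemma h_a0a0a0a0 : (a0*a0*a0*a0 : MvPolynomial (Fin 3) ℚ) ∈ Jminus := by
  apply scaled_mem (3 : ℚ) (by norm_num)
  rw [show (C (3 : ℚ)) * (a0*a0*a0*a0 : MvPolynomial (Fin 3) ℚ) = (32 * a0^2) * (2 * a1 * b0 - a1 * a0) + (-64 * a1) * (a0 ^ 2 * b0) + (1 * a0) * (3 * a0 ^ 3 + 32 * a1 * a0 ^ 2) by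
    simp only [C_num, map_ofNat, map_one, a0, a1, b0]; ring]
  exact add_mem (add_mem (Ideal.mul_mem_left _ _ hg2) (Ideal.mul_mem_left _ _ hg4)) (Ideal.mul_mem_left _ _ hg5)

lemma h_a0a0a0a1 : (a0*a0*a0*a1 : MvPolynomial (Fin 3) ℚ) ∈ Jminus := by
  apply scaled_mem (1 : ℚ) (by norm_num)
  rw [show (C (1 : ℚ)) * (a0*a0*a0*a1 : MvPolynomial (Fin 3) ℚ) = (-1 * a0^2) * (2 * a1 * b0 - a1 * a0) + (2 * a1) * (a0 ^ 2 * b0) by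
    simp only [C_num, map_ofNat, map_one, a0, a1, b0]; ring]
  exact add_mem (Ideal.mul_mem_left _ _ hg2) (Ideal.mul_mem_left _ _ hg4)

lemma h_a0a0a0b0 : (a0*a0*a0*b0 : MvPolynomial (Fin 3) ℚ) ∈ Jminus := by
  apply scaled_mem (1 : ℚ) (by norm_num)
  rw [show (C (1 : ℚ)) * (a0*a0*a0*b0 : MvPolynomial (Fin 3) ℚ) = (1 * a0) * (a0 ^ 2 * b0) by
    simp only [C_num, map_ofNat, map_one, a0, a1, b0]; ring]
  exact Ideal.mul_mem_left _ _ hg4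

lemma h_a0a0a1a1 : (a0*a0*a1*a1 : MvPolynomial (Fin 3) ℚ) ∈ Jminus := by
  apply scaled_mem (6 : ℚ) (by norm_num)
  rw [show (C (6 : ℚ)) * (a0*a0*a1*a1 : MvPolynomial (Fin 3) ℚ) = (2 * a0*a1) * (3 * b0 ^ 2 + 6 * a1 * b0 - a0 * b0) + (-6 * a0*a1) * (2 * a1 * b0 - a1 * a0) + (-3 * a0*b0) * (2 * a1 * b0 - a1 * a0) + (-1 * a1) * (a0 ^ 2 * b0) by
    simp only [C_num, map_ofNat, map_one, a0, a1, b0]; ring]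
  exact add_mem (add_mem (add_mem (Ideal.mul_mem_left _ _ hg1) (Ideal.mul_mem_left _ _ hg2)) (Ideal.mul_mem_left _ _ hg2)) (Ideal.mul_mem_left _ _ hg4)

lemma h_a0a0a1b0 : (a0*a0*a1*b0 : MvPolynomial (Fin 3) ℚ) ∈ Jminus := by
  apply scaled_mem (1 : ℚ) (by norm_num)
  rw [show (C (1 : ℚ)) * (a0*a0*a1*b0 : MvPolynomial (Fin 3) ℚ) = (1 * a1) * (a0 ^ 2 * b0) by
    simp only [C_num, map_ofNat, map_one, a0, a1, b0]; ring]
  exact Ideal.mul_mem_left _ _ hg4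

lemma h_a0a0b0b0 : (a0*a0*b0*b0 : MvPolynomial (Fin 3) ℚ) ∈ Jminus := by
  apply scaled_mem (3 : ℚ) (by norm_num)
  rw [show (C (3 : ℚ)) * (a0*a0*b0*b0 : MvPolynomial (Fin 3) ℚ) = (1 * a0^2) * (3 * b0 ^ 2 + 6 * a1 * b0 - a0 * b0) + (1 * a0) * (a0 ^ 2 * b0) + (-6 * a1) * (a0 ^ 2 * b0) by
    simp only [C_num, map_ofNat, map_one, a0, a1, b0]; ring]
  exact add_mem (add_mem (Ideal.mul_mem_left _ _ hg1) (Ideal.mul_mem_left _ _ hg4)) (Ideal.mul_mem_left _ _ hg4)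

lemma h_a0a1a1a1 : (a0*a1*a1*a1 : MvPolynomial (Fin 3) ℚ) ∈ Jminus := by
  apply scaled_mem (72 : ℚ) (by norm_num)
  rw [show (C (72 : ℚ)) * (a0*a1*a1*a1 : MvPolynomial (Fin 3) ℚ) = (-2 * a0*a1) * (3 * b0 ^ 2 + 6 * a1 * b0 - a0 * b0) + (24 * a1^2) * (3 * b0 ^ 2 + 6 * a1 * b0 - a0 * b0) + (3 * a0*b0) * (2 * a1 * b0 - a1 * a0) + (-72 * a1^2) * (2 * a1 * b0 - a1 * a0) + (-36 * a1*b0) * (2 * a1 * b0 - a1 * a0) + (1 * a1) * (a0 ^ 2 * b0) by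
    simp only [C_num, map_ofNat, map_one, a0, a1, b0]; ring]
  exact add_mem (add_mem (add_mem (add_mem (add_mem (Ideal.mul_mem_left _ _ hg1) (Ideal.mul_mem_left _ _ hg1)) (Ideal.mul_mem_left _ _ hg2)) (Ideal.mul_mem_left _ _ hg2)) (Ideal.mul_mem_left _ _ hg2)) (Ideal.mul_mem_left _ _ hg4)

lemma h_a0a1a1b0 : (a0*a1*a1*b0 : MvPolynomial (Fin 3) ℚ) ∈ Jminus := by
  apply scaled_mem (12 : ℚ) (by norm_num)
  rw [show (C (12 : ℚ)) * (a0*a1*a1*b0 : MvPolynomial (Fin 3) ℚ) = (2 * a0*a1) * (3 * b0 ^ 2 + 6 * a1 * b0 - a0 * b0) + (-3 * a0*b0) * (2 * a1 * b0 - a1 * a0) + (-1 * a1) * (a0 ^ 2 * b0) by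
    simp only [C_num, map_ofNat, map_one, a0, a1, b0]; ring]
  exact add_mem (add_mem (Ideal.mul_mem_left _ _ hg1) (Ideal.mul_mem_left _ _ hg2)) (Ideal.mul_mem_left _ _ hg4)

lemma h_a0a1b0b0 : (a0*a1*b0*b0 : MvPolynomial (Fin 3) ℚ) ∈ Jminus := by
  apply scaled_mem (2 : ℚ) (by norm_num)
  rw [show (C (2 : ℚ)) * (a0*a1*b0*b0 : MvPolynomial (Fin 3) ℚ) = (1 * a0*b0) * (2 * a1 * b0 - a1 * a0) + (1 * a1) * (a0 ^ 2 * b0) by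
    simp only [C_num, map_ofNat, map_one, a0, a1, b0]; ring]
  exact add_mem (Ideal.mul_mem_left _ _ hg2) (Ideal.mul_mem_left _ _ hg4)

lemma h_a0b0b0b0 : (a0*b0*b0*b0 : MvPolynomial (Fin 3) ℚ) ∈ Jminus := by
  apply scaled_mem (9 : ℚ) (by norm_num)
  rw [show (C (9 : ℚ)) * (a0*b0*b0*b0 : MvPolynomial (Fin 3) ℚ) = (1 * a0^2) * (3 * b0 ^ 2 + 6 * a1 * b0 - a0 * b0) + (3 * a0*b0) * (3 * b0 ^ 2 + 6 * a1 * b0 - a0 * b0) + (-9 * a0*b0) * (2 * a1 * b0 - a1 * a0) + (1 * a0) * (a0 ^ 2 * b0) + (-15 * a1) * (a0 ^ 2 * b0) by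
    simp only [C_num, map_ofNat, map_one, a0, a1, b0]; ring]
  exact add_mem (add_mem (add_mem (add_mem (Ideal.mul_mem_left _ _ hg1) (Ideal.mul_mem_left _ _ hg1)) (Ideal.mul_mem_left _ _ hg2)) (Ideal.mul_mem_left _ _ hg4)) (Ideal.mul_mem_left _ _ hg4)

lemma h_a1a1a1a1 : (a1*a1*a1*a1 : MvPolynomial (Fin 3) ℚ) ∈ Jminus := by
  apply scaled_mem (864 : ℚ) (by norm_num)
  rw [show (C (864 : ℚ)) * (a1*a1*a1*a1 : MvPolynomial (Fin 3) ℚ) = (2 * a0*a1) * (3 * b0 ^ 2 + 6 * a1 * b0 - a0 * b0) + (-24 * a1^2) * (3 * b0 ^ 2 + 6 * a1 * b0 - a0 * b0) + (-3 * a0*b0) * (2 * a1 * b0 - a1 * a0) + (72 * a1^2) * (2 * a1 * b0 - a1 * a0) + (36 * a1*b0) * (2 * a1 * b0 - a1 * a0) + (72 * a1^2) * (12 * a1 ^ 2 + a1 * a0) + (-1 * a1) * (a0 ^ 2 * b0) by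
    simp only [C_num, map_ofNat, map_one, a0, a1, b0]; ring]
  exact add_mem (add_mem (add_mem (add_mem (add_mem (add_mem (Ideal.mul_mem_left _ _ hg1) (Ideal.mul_mem_left _ _ hg1)) (Ideal.mul_mem_left _ _ hg2)) (Ideal.mul_mem_left _ _ hg2)) (Ideal.mul_mem_left _ _ hg2)) (Ideal.mul_mem_left _ _ hg3)) (Ideal.mul_mem_left _ _ hg4)

lemma h_a1a1a1b0 : (a1*a1*a1*b0 : MvPolynomial (Fin 3) ℚ) ∈ Jminus := by
  apply scaled_mem (144 : ℚ) (by norm_num)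
  rw [show (C (144 : ℚ)) * (a1*a1*a1*b0 : MvPolynomial (Fin 3) ℚ) = (-2 * a0*a1) * (3 * b0 ^ 2 + 6 * a1 * b0 - a0 * b0) + (24 * a1^2) * (3 * b0 ^ 2 + 6 * a1 * b0 - a0 * b0) + (3 * a0*b0) * (2 * a1 * b0 - a1 * a0) + (-36 * a1*b0) * (2 * a1 * b0 - a1 * a0) + (1 * a1) * (a0 ^ 2 * b0) by
    simp only [C_num, map_ofNat, map_one, a0, a1, b0]; ring]
  exact add_mem (add_mem (add_mem (add_mem (Ideal.mul_mem_left _ _ hg1) (Ideal.mul_mem_left _ _ hg1)) (Ideal.mul_mem_left _ _ hg2)) (Ideal.mul_mem_left _ _ hg2)) (Ideal.mul_mem_left _ _ hg4)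

lemma h_a1a1b0b0 : (a1*a1*b0*b0 : MvPolynomial (Fin 3) ℚ) ∈ Jminus := by
  apply scaled_mem (24 : ℚ) (by norm_num)
  rw [show (C (24 : ℚ)) * (a1*a1*b0*b0 : MvPolynomial (Fin 3) ℚ) = (2 * a0*a1) * (3 * b0 ^ 2 + 6 * a1 * b0 - a0 * b0) + (-3 * a0*b0) * (2 * a1 * b0 - a1 * a0) + (12 * a1*b0) * (2 * a1 * b0 - a1 * a0) + (-1 * a1) * (a0 ^ 2 * b0) by
    simp only [C_num, map_ofNat, map_one, a0, a1, b0]; ring]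
  exact add_mem (add_mem (add_mem (Ideal.mul_mem_left _ _ hg1) (Ideal.mul_mem_left _ _ hg2)) (Ideal.mul_mem_left _ _ hg2)) (Ideal.mul_mem_left _ _ hg4)

lemma h_a1b0b0b0 : (a1*b0*b0*b0 : MvPolynomial (Fin 3) ℚ) ∈ Jminus := by
  apply scaled_mem (12 : ℚ) (by norm_num)
  rw [show (C (12 : ℚ)) * (a1*b0*b0*b0 : MvPolynomial (Fin 3) ℚ) = (-2 * a0*a1) * (3 * b0 ^ 2 + 6 * a1 * b0 - a0 * b0) + (4 * a1*b0) * (3 * b0 ^ 2 + 6 * a1 * b0 - a0 * b0) + (5 * a0*b0) * (2 * a1 * b0 - a1 * a0) + (-12 * a1*b0) * (2 * a1 * b0 - a1 * a0) + (3 * a1) * (a0 ^ 2 * b0) by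
    simp only [C_num, map_ofNat, map_one, a0, a1, b0]; ring]
  exact add_mem (add_mem (add_mem (add_mem (Ideal.mul_mem_left _ _ hg1) (Ideal.mul_mem_left _ _ hg1)) (Ideal.mul_mem_left _ _ hg2)) (Ideal.mul_mem_left _ _ hg2)) (Ideal.mul_mem_left _ _ hg4)

lemma h_b0b0b0b0 : (b0*b0*b0*b0 : MvPolynomial (Fin 3) ℚ) ∈ Jminus := by
  apply scaled_mem (54 : ℚ) (by norm_num)
  rw [show (C (54 : ℚ)) * (b0*b0*b0*b0 : MvPolynomial (Fin 3) ℚ) = (2 * a0^2) * (3 * b0 ^ 2 + 6 * a1 * b0 - a0 * b0) + (18 * a0*a1) * (3 * b0 ^ 2 + 6 * a1 * b0 - a0 * b0) + (6 * a0*b0) * (3 * b0 ^ 2 + 6 * a1 * b0 - a0 * b0) + (-36 * a1*b0) * (3 * b0 ^ 2 + 6 * a1 * b0 - a0 * b0) + (18 * b0^2) * (3 * b0 ^ 2 + 6 * a1 * b0 - a0 * b0) + (-63 * a0*b0) * (2 * a1 * b0 - a1 * a0) + (108 * a1*b0) * (2 * a1 * b0 - a1 * a0) + (2 * a0) * (a0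 ^ 2 * b0) + (-57 * a1) * (a0 ^ 2 * b0) by
    simp only [C_num, map_ofNat, map_one, a0, a1, b0]; ring]
  exact add_mem (add_mem (add_mem (add_mem (add_mem (add_mem (add_mem (add_mem (Ideal.mul_mem_left _ _ hg1) (Ideal.mul_mem_left _ _ hg1)) (Ideal.mul_mem_left _ _ hg1)) (Ideal.mul_mem_left _ _ hg1)) (Ideal.mul_mem_left _ _ hg1)) (Ideal.mul_mem_left _ _ hg2)) (Ideal.mul_mem_left _ _ hg2)) (Ideal.mul_mem_left _ _ hg4)) (Ideal.mul_mem_left _ _ hg4)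

lemma key : ∀ p ∈ ({a0, a1, b0} : Set (MvPolynomial (Fin 3) ℚ)),
    ∀ q ∈ ({a0, a1, b0} : Set (MvPolynomial (Fin 3) ℚ)),
    ∀ r ∈ ({a0, a1, b0} : Set (MvPolynomial (Fin 3) ℚ)),
    ∀ s ∈ ({a0, a1, b0} : Set (MvPolynomial (Fin 3) ℚ)),
    p * q * r * s ∈ Jminus := by
  intro p hp q hq r hr s hs
  simp only [Set.mem_insert_iff, Set.mem_singleton_iff] at hp hq hr hs
  rcases hp with rfl | rfl | rfl <;> rcases hq with rfl | rfl | rfl <;>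
    rcases hr with rfl | rfl | rfl <;> rcases hs with rfl | rfl | rfl <;>
    first | (refine mem_of_eq ?_ h_a0a0a0a0; ring1) | (refine mem_of_eq ?_ h_a0a0a0a1; ring1) | (refine mem_of_eq ?_ h_a0a0a0b0; ring1) | (refine mem_of_eq ?_ h_a0a0a1a1; ring1) | (refine mem_of_eq ?_ h_a0a0a1b0; ring1) | (refine mem_of_eq ?_ h_a0a0b0b0; ring1) | (refine mem_of_eq ?_ h_a0a1a1a1; ring1) | (refine mem_of_eq ?_ h_a0a1a1b0; ring1) | (refine mem_of_eq ?_ h_a0a1b0b0; ring1) | (refine mem_of_eq ?_ h_a0b0b0b0; ring1) | (refine mem_of_eq ?_ h_a1a1a1a1; ring1) | (refine mem_of_eq ?_ h_a1a1a1b0; ring1) | (refine mem_of_eq ?_ h_a1a1b0b0; ring1) | (refine mem_of_eq ?_ h_a1b0b0b0; ring1) | (refine mem_of_eq ?_ h_b0b0b0b0; ring1)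

noncomputable def Sq : Set (MvPolynomial (Fin 3) ℚ ⧸ Jminus) :=
  {Ideal.Quotient.mk Jminus a0, Ideal.Quotient.mk Jminus a1, Ideal.Quotient.mk Jminus b0}

set_option maxHeartbeats 1000000 in
set_option synthInstance.maxHeartbeats 200000 in
theorem stmt18 : mIdeal ^ 4 = ⊥ := by
  have hpow : mIdeal ^ 4 = Ideal.span (Sq * Sq * Sq * Sq) := by
    rw [show mIdeal = Ideal.span Sq from rfl,pow_succ, pow_succ, pow_succ, pow_one, Ideal.span_mul_span', Ideal.span_mul_span',
      Ideal.span_mul_span']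
  rw [eq_bot_iff, hpow, Ideal.span_le]
  rintro z hz
  rw [Set.mem_mul] at hz
  obtain ⟨x, hx, s', hs', rfl⟩ := hz
  rw [Set.mem_mul] at hx
  obtain ⟨y, hy, r', hr', rfl⟩ := hx
  rw [Set.mem_mul] at hy
  obtain ⟨p', hp', q', hq', rfl⟩ := hy
  have lift : ∀ w ∈ Sq, ∃ w' ∈ ({a0, a1, b0} : Set (MvPolynomial (Fin 3) ℚ)),
      Ideal.Quotient.mk Jminus w' = w := by
    intro w hw
    simp only [Sq, Set.mem_insert_iff, Set.mem_singleton_iff] at hw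
    rcases hw with rfl | rfl | rfl
    · exact ⟨a0, by simp, rfl⟩
    · exact ⟨a1, by simp, rfl⟩
    · exact ⟨b0, by simp, rfl⟩
  obtain ⟨pa, hpa, rfl⟩ := lift _ hp'
  obtain ⟨qa, hqa, rfl⟩ := lift _ hq'
  obtain ⟨ra, hra, rfl⟩ := lift _ hr'
  obtain ⟨sa, hsa, rfl⟩ := lift _ hs'
  rw [SetLike.mem_coe, Ideal.mem_bot, ← map_mul, ← map_mul, ← map_mul,
    Ideal.Quotient.eq_zero_iff_mem]
  exact key pa hpa qa hqa ra hra sa hsa
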